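/- arXiv:2102.08432 — 9 statements merged into one kernel-verified Lean document; each statement's English description precedes it below -/
import Mathlib

section
/- For any vertex-weighted graph (G,w), χ_POC(G,w) ≤ ℓ(G), where ℓ(G) is the number of vertices of a longest path in G. Consequently f(G) = ℓ(G). -/
open SimpleGraph

/-- A vertex coloring `c` is a properly ordered coloring (POC) of the
vertex-weighted graph `(G, w)`. -/
def IsPOC {V : Type*} (G : SimpleGraph V) (w c : V → ℕ) : Prop :=
  ∀ ⦃u v : V⦄, G.Adj u v → (w v < w u → c v < c u) ∧ (w u = w v → c u ≠ c v)

/-- `χ_POC(G,w)`: minimum `θ` such that some POC of `(G,w)` uses colors in `{1,…,θ}`. -/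
noncomputable def pocNumber {V : Type*} (G : SimpleGraph V) (w : V → ℕ) : ℕ :=
  sInf {θ | ∃ c : V → ℕ, (∀ v, 1 ≤ c v ∧ c v ≤ θ) ∧ IsPOC G w c}

/-- `ℓ(G)`: the number of vertices of a longest path in `G`. -/
noncomputable def longestPath {V : Type*} (G : SimpleGraph V) : ℕ :=
  sSup {n | ∃ (u v : V) (p : G.Walk u v), p.IsPath ∧ n = p.length + 1}

/-- `f(G)`: maximum of `χ_POC(G,w)` over all weight functions `w`. -/
noncomputable def fPOC {V : Type*} (G : SimpleGraph V) : ℕ :=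
  sSup {n | ∃ w : V → ℕ, n = pocNumber G w}

/-- `χ_POC(G;t)`: maximum of `χ_POC(G,w)` over weight functions with values in `{1,…,t}`. -/
noncomputable def pocNumberT {V : Type*} (G : SimpleGraph V) (t : ℕ) : ℕ :=
  sSup {n | ∃ w : V → ℕ, (∀ v, 1 ≤ w v ∧ w v ≤ t) ∧ n = pocNumber G w}

section Aux
variable {V : Type*} [Fintype V] [Nonempty V] (G : SimpleGraph V)

lemma pathSet_bdd : BddAbove {n | ∃ (u v : V) (p : G.Walk u v), p.IsPath ∧ n = p.length + 1} := by
  refine ⟨Fintype.card V, ?_⟩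
  rintro n ⟨u, v, p, hp, rfl⟩
  exact hp.length_lt

lemma pathSet_nonempty :
    (1 : ℕ) ∈ {n | ∃ (u v : V) (p : G.Walk u v), p.IsPath ∧ n = p.length + 1} := by
  obtain ⟨a⟩ := ‹Nonempty V›
  exact ⟨a, a, Walk.nil, Walk.IsPath.nil, rfl⟩

/-- There is a POC with colors in `{1, …, ℓ(G)}`. -/
lemma exists_poc (w : V → ℕ) :
    ∃ c : V → ℕ, (∀ v, 1 ≤ c v ∧ c v ≤ longestPath G) ∧ IsPOC G w c := by
  classical
  set N := Fintype.card V with hNdef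
  have hN : 0 < N := Fintype.card_pos
  set g : V → ℕ := fun v => ((Fintype.equivFin V) v : ℕ) with hg
  have hglt : ∀ v, g v < N := fun v => ((Fintype.equivFin V) v).2
  set W : V → ℕ := fun v => w v * N + g v with hW
  have hWlt : ∀ {a b : V}, w a < w b → W a < W b := by
    intro a b h
    have : w a * N + g a < (w a + 1) * N := by
      rw [add_mul, one_mul]; exact Nat.add_lt_add_left (hglt a) _
    calc W a < (w a + 1) * N := this
      _ ≤ w b * N := Nat.mul_le_mul_right N h
      _ ≤ W b := Nat.le_add_right _ _
  have hWne : ∀ {a b : V}, w a = w b → a ≠ b → W a ≠ W b := by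
    intro a b hw hab hWab
    simp only [hW, hw] at hWab
    have : g a = g b := by omega
    exact hab ((Fintype.equivFin V).injective (Fin.ext this))
  -- decreasing-path sets
  set S : V → Set ℕ := fun v =>
    {n | ∃ (x : V) (p : G.Walk v x),
      List.Chain' (fun a b => b < a) (p.support.map W) ∧ n = p.length + 1} with hS
  have h1 : ∀ v, 1 ∈ S v := by
    intro v
    exact ⟨v, Walk.nil, List.IsChain.singleton _, rfl⟩
  have hub : ∀ v, ∀ n ∈ S v, n ≤ longestPath G := by
    rintro v n ⟨x, p, hch, rfl⟩
    have hpw : (p.support.map W).Pairwise (fun a b => b < a) :=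
      List.isChain_iff_pairwise.mp hch
    have hnd : (p.support.map W).Nodup := hpw.imp (fun h => (ne_of_lt h).symm)
    have hpath : p.IsPath := (Walk.isPath_def p).mpr (hnd.of_map W)
    exact le_csSup (pathSet_bdd G) ⟨v, x, p, hpath, rfl⟩
  have hSbdd : ∀ v, BddAbove (S v) := fun v => ⟨longestPath G, fun n hn => hub v n hn⟩
  set c : V → ℕ := fun v => sSup (S v) with hc
  have hcmem : ∀ v, c v ∈ S v := fun v => Nat.sSup_mem ⟨1, h1 v⟩ (hSbdd v)
  have hc1 : ∀ v, 1 ≤ c v := fun v => le_csSup (hSbdd v) (h1 v)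
  have hcl : ∀ v, c v ≤ longestPath G := fun v => csSup_le ⟨1, h1 v⟩ (hub v)
  have key : ∀ {u v : V}, G.Adj u v → W v < W u → c v < c u := by
    intro u v huv hWvu
    obtain ⟨x, p, hch, hn⟩ := hcmem v
    have hmem : p.length + 1 + 1 ∈ S u := by
      refine ⟨x, Walk.cons huv p, ?_, by simp⟩
      rw [Walk.support_cons, List.map_cons]
      refine List.isChain_cons.mpr ⟨?_, hch⟩
      intro y hy
      rw [p.support_eq_cons, List.map_cons, List.head?_cons, Option.mem_some_iff] at hy
      rw [← hy]; exact hWvu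
    calc c v = p.length + 1 := hn
      _ < p.length + 1 + 1 := Nat.lt_succ_self _
      _ ≤ c u := le_csSup (hSbdd u) hmem
  refine ⟨c, fun v => ⟨hc1 v, hcl v⟩, ?_⟩
  intro u v huv
  constructor
  · intro h
    exact key huv (hWlt h)
  · intro hw
    rcases lt_or_gt_of_ne (hWne hw huv.ne) with h | h
    · exact (key huv.symm h).ne
    · exact (key huv h).ne'
end Aux

section Main
variable {V : Type*} [Fintype V] [Nonempty V] (G : SimpleGraph V)

lemma poc_le_longest (w : V → ℕ) : pocNumber G w ≤ longestPath G := by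
  obtain ⟨c, hc, hpoc⟩ := exists_poc G w
  exact Nat.sInf_le ⟨c, hc, hpoc⟩

lemma longest_le_poc : ∃ w : V → ℕ, longestPath G ≤ pocNumber G w := by
  classical
  have hmem : longestPath G ∈
      {n | ∃ (u v : V) (p : G.Walk u v), p.IsPath ∧ n = p.length + 1} :=
    Nat.sSup_mem ⟨1, pathSet_nonempty G⟩ (pathSet_bdd G)
  obtain ⟨a, b, p, hp, hl⟩ := hmem
  set w : V → ℕ := fun v => p.support.idxOf v with hw
  refine ⟨w, ?_⟩
  obtain ⟨c0, hc0, hpoc0⟩ := exists_poc G w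
  refine le_csInf ⟨longestPath G, c0, hc0, hpoc0⟩ ?_
  rintro θ ⟨c, hbd, hpoc⟩
  set s := p.support with hs
  have hnd : s.Nodup := hp.support_nodup
  have hchain : List.Chain' (· < ·) (s.map c) := by
    rw [List.Chain', List.isChain_iff_getElem]
    intro i hi
    simp only [List.length_map] at hi
    have h1 : i < s.length := by omega
    have h2 : i + 1 < s.length := by omega
    have hadj : G.Adj (s.get ⟨i, h1⟩) (s.get ⟨i + 1, h2⟩) :=
      List.isChain_iff_getElem.mp (Walk.isChain_adj_support p) i hi
    have hwlt : w (s.get ⟨i, h1⟩) < w (s.get ⟨i + 1, h2⟩) := by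
      simp only [hw, List.get_eq_getElem]
      rw [List.Nodup.idxOf_getElem hnd i h1, List.Nodup.idxOf_getElem hnd (i + 1) h2]
      omega
    simpa only [List.getElem_map, List.get_eq_getElem] using (hpoc hadj.symm).1 hwlt
  have hpw := List.isChain_iff_pairwise.mp hchain
  have hnd2 : (s.map c).Nodup := hpw.imp ne_of_lt
  have hsub : (s.map c).toFinset ⊆ Finset.Icc 1 θ := by
    intro x hx
    rw [List.mem_toFinset] at hx
    obtain ⟨v, _, rfl⟩ := List.mem_map.mp hx
    exact Finset.mem_Icc.mpr (hbd v)
  have hcard := Finset.card_le_card hsub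
  rw [List.toFinset_card_of_nodup hnd2] at hcard
  have hlen : (s.map c).length = longestPath G := by
    rw [List.length_map, hs, Walk.length_support, ← hl]
  rw [hlen] at hcard
  simpa [Nat.card_Icc] using hcard

end Main

/-- `χ_POC(G,w) ≤ ℓ(G)` for every weight function `w`, and
consequently `f(G) = ℓ(G)`. -/
theorem fPOC_eq_longestPath {V : Type*} [Fintype V] [Nonempty V] (G : SimpleGraph V) :
    (∀ w : V → ℕ, pocNumber G w ≤ longestPath G) ∧ fPOC G = longestPath G := by
  have h1 : ∀ w : V → ℕ, pocNumber G w ≤ longestPath G := poc_le_longest G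
  refine ⟨h1, le_antisymm ?_ ?_⟩
  · refine csSup_le ⟨pocNumber G (fun _ => 0), fun _ => 0, rfl⟩ ?_
    rintro n ⟨w, rfl⟩
    exact h1 w
  · obtain ⟨w, hw⟩ := longest_le_poc G
    refine hw.trans (le_csSup ⟨longestPath G, ?_⟩ ⟨w, rfl⟩)
    rintro n ⟨w', rfl⟩
    exact h1 w'
end

section
/- A graph G satisfies f(G) = |V(G)| (i.e., some weighting of G requires |V(G)| colors in every properly ordered coloring) if and only if G has a Hamiltonian path. -/
open SimpleGraph

/-! ### Auxiliary material -/

section Aux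

variable {V : Type*} [Fintype V]

/-- A nodup list of naturals with values in `{1,…,θ}` has length at most `θ`. -/
private lemma nodup_len_le {θ : ℕ} {l : List ℕ} (hn : l.Nodup)
    (hb : ∀ x ∈ l, 1 ≤ x ∧ x ≤ θ) : l.length ≤ θ := by
  have h1 : l.toFinset ⊆ Finset.Icc 1 θ := by
    intro x hx
    rw [List.mem_toFinset] at hx
    exact Finset.mem_Icc.2 (hb x hx)
  have h2 := Finset.card_le_card h1
  rwa [List.toFinset_card_of_nodup hn, Nat.card_Icc, Nat.add_sub_cancel] at h2

/-- The tie-broken strict comparison on vertices. -/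
def rlt (w e : V → ℕ) (u v : V) : Prop :=
  w u < w v ∨ (w u = w v ∧ e u < e v)

lemma rlt_trans {w e : V → ℕ} {a b c : V}
    (h1 : rlt w e a b) (h2 : rlt w e b c) : rlt w e a c := by
  rcases h1 with h | ⟨h, h'⟩ <;> rcases h2 with g | ⟨g, g'⟩
  · exact Or.inl (h.trans g)
  · exact Or.inl (h.trans_eq g)
  · exact Or.inl (h.trans_lt g)
  · exact Or.inr ⟨h.trans g, h'.trans g'⟩

lemma rlt_irrefl {w e : V → ℕ} (v : V) : ¬ rlt w e v v := by
  simp [rlt]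

lemma rlt_total_ne {w e : V → ℕ} (he : Function.Injective e) {u v : V} (h : u ≠ v) :
    rlt w e u v ∨ rlt w e v u := by
  rcases lt_trichotomy (w u) (w v) with hw | hw | hw
  · exact Or.inl (Or.inl hw)
  · rcases lt_trichotomy (e u) (e v) with hev | hev | hev
    · exact Or.inl (Or.inr ⟨hw, hev⟩)
    · exact absurd (he hev) h
    · exact Or.inr (Or.inr ⟨hw.symm, hev⟩)
  · exact Or.inr (Or.inl hw)

open Classical in
/-- The rank of a vertex with respect to `rlt`. -/
noncomputable def rrank (w e : V → ℕ) (v : V) : ℕ :=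
  (Finset.univ.filter (fun u => rlt w e u v)).card + 1

open Classical in
lemma rrank_lt_rrank {w e : V → ℕ} {a b : V} (h : rlt w e a b) :
    rrank w e a < rrank w e b := by
  classical
  have hsub : Finset.univ.filter (fun u => rlt w e u a) ⊆
      Finset.univ.filter (fun u => rlt w e u b) := by
    intro u hu
    simp only [Finset.mem_filter, Finset.mem_univ, true_and] at *
    exact rlt_trans hu h
  have hmem : a ∈ Finset.univ.filter (fun u => rlt w e u b) := by
    simp [h]
  have hna : a ∉ Finset.univ.filter (fun u => rlt w e u a) := by
    simp [rlt_irrefl]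
  have hss : Finset.univ.filter (fun u => rlt w e u a) ⊂
      Finset.univ.filter (fun u => rlt w e u b) :=
    Finset.ssubset_iff_of_subset hsub |>.2 ⟨a, hmem, hna⟩
  have := Finset.card_lt_card hss
  simp only [rrank]
  omega

open Classical in
lemma rrank_le {w e : V → ℕ} (v : V) : rrank w e v ≤ Fintype.card V := by
  classical
  have hss : Finset.univ.filter (fun u => rlt w e u v) ⊂ Finset.univ := by
    rw [Finset.ssubset_def]
    refine ⟨Finset.filter_subset _ _, fun hsub => ?_⟩
    have := hsub (Finset.mem_univ v)
    simp [rlt_irrefl] at this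
  have := Finset.card_lt_card hss
  simp only [rrank, Finset.card_univ] at *
  omega

lemma one_le_rrank {w e : V → ℕ} (v : V) : 1 ≤ rrank w e v := Nat.le_add_left 1 _

lemma rrank_isPOC (G : SimpleGraph V) (w : V → ℕ) {e : V → ℕ}
    (he : Function.Injective e) : IsPOC G w (rrank w e) := by
  intro u v hadj
  refine ⟨fun h => rrank_lt_rrank (Or.inl h), fun _ => ?_⟩
  rcases rlt_total_ne (w := w) he hadj.ne with h1 | h1
  · exact (rrank_lt_rrank h1).ne
  · exact (rrank_lt_rrank h1).ne'

/-- A canonical injection `V → ℕ`. -/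
noncomputable def emb (V : Type*) [Fintype V] : V → ℕ :=
  fun v => ((Fintype.equivFin V) v : ℕ)

lemma emb_injective (V : Type*) [Fintype V] : Function.Injective (emb V) :=
  fun _ _ h => (Fintype.equivFin V).injective (Fin.val_injective h)

lemma card_mem_pocSet (G : SimpleGraph V) (w : V → ℕ) :
    Fintype.card V ∈ {θ | ∃ c : V → ℕ, (∀ v, 1 ≤ c v ∧ c v ≤ θ) ∧ IsPOC G w c} :=
  ⟨rrank w (emb V), fun v => ⟨one_le_rrank v, rrank_le v⟩,
    rrank_isPOC G w (emb_injective V)⟩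

lemma pocNumber_le_card (G : SimpleGraph V) (w : V → ℕ) :
    pocNumber G w ≤ Fintype.card V :=
  Nat.sInf_le (card_mem_pocSet G w)

/-- Build a walk out of an adjacency chain. -/
lemma chain_walk (G : SimpleGraph V) :
    ∀ (t : List V) (a : V), List.Chain G.Adj a t →
      ∃ (v : V) (p : G.Walk a v), p.support = a :: t := by
  intro t
  induction t with
  | nil => exact fun a _ => ⟨a, Walk.nil, rfl⟩
  | cons b t ih =>
    intro a h
    replace h : G.Adj a b ∧ List.Chain G.Adj b t := List.isChain_cons_cons.1 h
    obtain ⟨v, p, hp⟩ := ih b h.2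
    exact ⟨v, Walk.cons h.1 p, by simp [hp]⟩

end Aux

section Main

variable {V : Type*} [Fintype V] [Nonempty V] (G : SimpleGraph V)

lemma forward_dir (hG : fPOC G = Fintype.card V) :
    ∃ (u v : V) (p : G.Walk u v), p.IsPath ∧ ∀ x : V, x ∈ p.support := by
  classical
  set n := Fintype.card V with hn
  have hnpos : 1 ≤ n := Fintype.card_pos
  -- extract a weight function achieving n
  have hbdd : BddAbove {m | ∃ w : V → ℕ, m = pocNumber G w} := by
    refine ⟨n, fun m hm => ?_⟩
    obtain ⟨w, rfl⟩ := hm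
    exact pocNumber_le_card G w
  have hne : {m | ∃ w : V → ℕ, m = pocNumber G w}.Nonempty :=
    ⟨pocNumber G (fun _ => 0), fun _ => 0, rfl⟩
  have hmem := Nat.sSup_mem hne hbdd
  rw [show sSup {m | ∃ w : V → ℕ, m = pocNumber G w} = fPOC G from rfl, hG] at hmem
  obtain ⟨w, hw⟩ := hmem
  -- the DAG relation
  set e := emb V with he
  have hei := emb_injective V
  set R : V → V → Prop := fun u v => G.Adj u v ∧ rlt w e u v with hR
  have hRchain_len : ∀ l : List V, l.Chain' R → l.Nodup ∧ l.length ≤ n := by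
    intro l hl
    have hmap : (l.map (rrank w e)).Chain' (· < ·) := by
      show List.IsChain _ _; rw [List.isChain_map]
      exact hl.imp (fun a b hab => rrank_lt_rrank hab.2)
    have hpw : (l.map (rrank w e)).Pairwise (· < ·) :=
      List.isChain_iff_pairwise.1 hmap
    have hnd : (l.map (rrank w e)).Nodup := hpw.imp ne_of_lt
    have hlen := nodup_len_le hnd (fun x hx => by
      obtain ⟨a, _, rfl⟩ := List.mem_map.1 hx
      exact ⟨one_le_rrank a, rrank_le a⟩)
    rw [List.length_map] at hlen
    exact ⟨hnd.of_map _, hlen⟩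
  -- main claim: there is an R-chain of length n
  have hclaim : ∃ l : List V, l.Chain' R ∧ l.length = n := by
    by_contra hcon
    push_neg at hcon
    have hsh : ∀ l : List V, l.Chain' R → l.length ≤ n - 1 := by
      intro l hl
      have := (hRchain_len l hl).2
      have := hcon l hl
      omega
    -- the longest-chain coloring
    set C : V → Set ℕ := fun v =>
      {m | ∃ l : List V, l.Chain' R ∧ l.getLast? = some v ∧ m = l.length} with hC
    have hCbdd : ∀ v, BddAbove (C v) := by
      intro v
      refine ⟨n - 1, fun m hm => ?_⟩
      obtain ⟨l, hl, _, rfl⟩ := hm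
      exact hsh l hl
    have hCne : ∀ v, 1 ∈ C v := fun v => ⟨[v], List.isChain_singleton v, rfl, rfl⟩
    set c : V → ℕ := fun v => sSup (C v) with hc
    have hc1 : ∀ v, 1 ≤ c v := fun v => le_csSup (hCbdd v) (hCne v)
    have hcle : ∀ v, c v ≤ n - 1 := fun v =>
      csSup_le ⟨1, hCne v⟩ (fun m hm => by
        obtain ⟨l, hl, _, rfl⟩ := hm; exact hsh l hl)
    have hstep : ∀ a b : V, R a b → c a < c b := by
      intro a b hab
      have hmem : c a ∈ C a := Nat.sSup_mem ⟨1, hCne a⟩ (hCbdd a)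
      obtain ⟨l, hl, hlast, hlen⟩ := hmem
      have hchain : (l ++ [b]).Chain' R := by
        show List.IsChain _ _; rw [List.isChain_append]
        refine ⟨hl, List.isChain_singleton b, ?_⟩
        intro x hx y hy
        simp only [List.head?_cons, Option.mem_some_iff] at hy
        rw [hlast, Option.mem_some_iff] at hx
        subst hx; subst hy
        exact hab
      have hmem2 : c a + 1 ∈ C b :=
        ⟨l ++ [b], hchain, List.getLast?_concat (l := l), by simp [hlen]⟩
      have hle : c a + 1 ≤ c b := le_csSup (hCbdd b) hmem2
      omega
    have hPOC : IsPOC G w c := by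
      intro u v hadj
      constructor
      · intro hwlt
        exact hstep v u ⟨hadj.symm, Or.inl hwlt⟩
      · intro _
        rcases rlt_total_ne (w := w) hei hadj.ne with h1 | h1
        · exact (hstep u v ⟨hadj, h1⟩).ne
        · exact (hstep v u ⟨hadj.symm, h1⟩).ne'
    have : pocNumber G w ≤ n - 1 :=
      Nat.sInf_le ⟨c, fun v => ⟨hc1 v, hcle v⟩, hPOC⟩
    omega
  obtain ⟨l, hl, hlen⟩ := hclaim
  obtain ⟨hnd, -⟩ := hRchain_len l hl
  -- convert the chain to a Hamiltonian path
  have hladj : l.Chain' G.Adj := hl.imp (fun a b hab => hab.1)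
  obtain ⟨a, t, rfl⟩ : ∃ a t, l = a :: t := by
    cases l with
    | nil => simp [hn] at hlen; omega
    | cons a t => exact ⟨a, t, rfl⟩
  have hchainat : List.Chain G.Adj a t := hladj
  obtain ⟨v, p, hp⟩ := chain_walk G t a hchainat
  refine ⟨a, v, p, Walk.IsPath.mk' (hp ▸ hnd), fun x => ?_⟩
  rw [hp]
  have hfin : (a :: t).toFinset = Finset.univ := by
    apply Finset.eq_univ_of_card
    rw [List.toFinset_card_of_nodup hnd, hlen]
  have : x ∈ (a :: t).toFinset := hfin ▸ Finset.mem_univ x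
  rwa [List.mem_toFinset] at this

lemma backward_dir {u v : V} (p : G.Walk u v) (hp : p.IsPath)
    (hall : ∀ x : V, x ∈ p.support) : fPOC G = Fintype.card V := by
  classical
  set n := Fintype.card V with hn
  set l := p.support with hlval
  have hnd : l.Nodup := hp.support_nodup
  have hlen : l.length = n := by
    have hfin : l.toFinset = Finset.univ := Finset.eq_univ_iff_forall.2 (fun x => by
      rw [List.mem_toFinset]; exact hall x)
    have := List.toFinset_card_of_nodup hnd
    rw [hfin, Finset.card_univ] at this
    omega
  set w : V → ℕ := fun x => l.idxOf x with hwdef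
  have hladj : l.Chain' G.Adj := p.isChain_adj_support
  -- w is strictly increasing along l
  have hwchain : l.Chain' (fun a b => G.Adj a b ∧ w a < w b) := by
    show List.IsChain _ _; rw [List.isChain_iff_getElem]
    intro i hi
    have hadj : G.Adj (l.get ⟨i, by omega⟩) (l.get ⟨i + 1, by omega⟩) := by
      have := List.isChain_iff_getElem.1 hladj i hi
      exact this
    refine ⟨hadj, ?_⟩
    have h1 : l.idxOf (l.get ⟨i, by omega⟩) = i := List.get_idxOf hnd _
    have h2 : l.idxOf (l.get ⟨i + 1, by omega⟩) = i + 1 := List.get_idxOf hnd _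
    simp only [hwdef]
    simp only [List.get_eq_getElem] at h1 h2
    rw [h1, h2]
    omega
  -- every POC bound is at least n
  have hkey : ∀ θ ∈ {θ | ∃ c : V → ℕ, (∀ x, 1 ≤ c x ∧ c x ≤ θ) ∧ IsPOC G w c},
      n ≤ θ := by
    intro θ hθ
    obtain ⟨c, hcb, hcpoc⟩ := hθ
    have hcchain : l.Chain' (fun a b => c a < c b) := by
      refine hwchain.imp (fun a b hab => ?_)
      exact (hcpoc hab.1.symm).1 hab.2
    have hmap : (l.map c).Chain' (· < ·) := by
      show List.IsChain _ _; rw [List.isChain_map]; exact hcchain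
    have hndm : (l.map c).Nodup := (List.isChain_iff_pairwise.1 hmap).imp ne_of_lt
    have := nodup_len_le hndm (fun x hx => by
      obtain ⟨a, _, rfl⟩ := List.mem_map.1 hx
      exact hcb a)
    rw [List.length_map, hlen] at this
    exact this
  have hpw : pocNumber G w = n := by
    refine le_antisymm (pocNumber_le_card G w) ?_
    exact hkey _ (Nat.sInf_mem ⟨n, card_mem_pocSet G w⟩)
  have hbdd : BddAbove {m | ∃ w : V → ℕ, m = pocNumber G w} := by
    refine ⟨n, fun m hm => ?_⟩
    obtain ⟨w', rfl⟩ := hm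
    exact pocNumber_le_card G w'
  refine le_antisymm (csSup_le ⟨n, w, hpw.symm⟩ (fun m hm => ?_)) ?_
  · obtain ⟨w', rfl⟩ := hm
    exact pocNumber_le_card G w'
  · exact le_csSup hbdd ⟨w, hpw.symm⟩

end Main

/-- `f(G) = |V(G)|` iff `G` has a Hamiltonian path. -/
theorem fPOC_eq_card_iff_hamiltonianPath {V : Type*} [Fintype V] [Nonempty V]
    (G : SimpleGraph V) :
    fPOC G = Fintype.card V ↔
      ∃ (u v : V) (p : G.Walk u v), p.IsPath ∧ ∀ x : V, x ∈ p.support := by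
  constructor
  · exact forward_dir G
  · rintro ⟨u, v, p, hp, hall⟩
    exact backward_dir G p hp hall
end

section
/- The ordering-by-weights greedy coloring is a properly ordered coloring: given (G,w) with vertices ordered v_1,...,v_n so that w(v_1) ≤ ... ≤ w(v_n), define c(v_j) = 1 if v_j has no neighbor among v_1,...,v_{j-1}, and otherwise c(v_j) = 1 + max{c(v_i) : v_i v_j ∈ E(G), i < j}. Then c is a properly ordered coloring of (G,w) using at most ℓ(G) colors. -/
open SimpleGraph

private lemma greedy_mono {n : ℕ} (G : SimpleGraph (Fin n)) (c : Fin n → ℕ)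
    [DecidableRel G.Adj]
    (hc : ∀ j : Fin n,
      c j = ((Finset.univ.filter fun i : Fin n => i < j ∧ G.Adj i j).sup c) + 1)
    {i j : Fin n} (hij : i < j) (hadj : G.Adj i j) : c i < c j := by
  have hmem : i ∈ (Finset.univ.filter fun i : Fin n => i < j ∧ G.Adj i j) := by
    simp [hij, hadj]
  have := Finset.le_sup (f := c) hmem
  rw [hc j]
  omega

private lemma greedy_path {n : ℕ} (G : SimpleGraph (Fin n)) (c : Fin n → ℕ)
    [DecidableRel G.Adj]
    (hc : ∀ j : Fin n,
      c j = ((Finset.univ.filter fun i : Fin n => i < j ∧ G.Adj i j).sup c) + 1)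
    (j : Fin n) :
    ∃ (u : Fin n) (p : G.Walk j u), p.IsPath ∧ p.length + 1 = c j ∧
      ∀ x ∈ p.support, x ≤ j := by
  induction j using WellFoundedLT.induction with
  | _ j ih =>
    by_cases hne : (Finset.univ.filter fun i : Fin n => i < j ∧ G.Adj i j).Nonempty
    · obtain ⟨i, hmem, hsup⟩ := Finset.exists_mem_eq_sup _ hne c
      simp only [Finset.mem_filter, Finset.mem_univ, true_and] at hmem
      obtain ⟨hij, hadj⟩ := hmem
      obtain ⟨u, p, hp, hlen, hsupp⟩ := ih i hij
      have hjns : j ∉ p.support := fun h => absurd (hsupp j h) (not_le.2 hij)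
      refine ⟨u, SimpleGraph.Walk.cons hadj.symm p, hp.cons hjns, ?_, ?_⟩
      · simp [SimpleGraph.Walk.length_cons, hc j, ← hsup, hlen]
      · intro x hx
        rw [SimpleGraph.Walk.support_cons, List.mem_cons] at hx
        rcases hx with rfl | hx
        · exact le_refl _
        · exact le_of_lt (lt_of_le_of_lt (hsupp x hx) hij)
    · refine ⟨j, SimpleGraph.Walk.nil, SimpleGraph.Walk.IsPath.nil, ?_, ?_⟩
      · rw [hc j, Finset.not_nonempty_iff_eq_empty.1 hne]
        simp
      · intro x hx; simp at hx; simp [hx]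

/-- the greedy coloring along a non-decreasing weight ordering is a
POC using at most `ℓ(G)` colors. -/
theorem greedy_isPOC {n : ℕ} (G : SimpleGraph (Fin n)) (w : Fin n → ℕ)
    (hw : Monotone w) (c : Fin n → ℕ) [DecidableRel G.Adj]
    (hc : ∀ j : Fin n,
      c j = ((Finset.univ.filter fun i : Fin n => i < j ∧ G.Adj i j).sup c) + 1) :
    IsPOC G w c ∧ ∀ j : Fin n, c j ≤ longestPath G := by
  constructor
  · intro u v hadj
    constructor
    · intro hwv
      have hvu : v < u := by
        by_contra h
        exact absurd (hw (le_of_not_gt fun h' => h h')) (not_le.2 hwv)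
      exact greedy_mono G c hc hvu hadj.symm
    · intro _ hcc
      rcases lt_or_gt_of_ne hadj.ne with h | h
      · exact absurd hcc (ne_of_lt (greedy_mono G c hc h hadj))
      · exact absurd hcc.symm (ne_of_lt (greedy_mono G c hc h hadj.symm))
  · intro j
    obtain ⟨u, p, hp, hlen, _⟩ := greedy_path G c hc j
    have hbdd : BddAbove {m | ∃ (u v : Fin n) (p : G.Walk u v), p.IsPath ∧ m = p.length + 1} := by
      refine ⟨n, fun m hm => ?_⟩
      obtain ⟨a, b, q, hq, rfl⟩ := hm
      have := hq.length_lt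
      simpa using this
    calc c j = p.length + 1 := hlen.symm
      _ ≤ longestPath G := le_csSup hbdd ⟨j, u, p, hp, rfl⟩
end

section
/- For integers 1 ≤ m ≤ n and t ≥ 2m+1, the POC number of the complete bipartite graph satisfies χ_POC(K_{m,n}; t) = min{m+n, 2m+1}. -/
open SimpleGraph

/-! ### Auxiliary lemmas -/

section Aux

open Finset

variable {m n : ℕ}

/-- Counting function is strictly monotone in the key. -/
lemma POCaux.count_lt {α : Type*} [Fintype α] [DecidableEq α] (key : α → ℕ) {u v : α}
    (h : key u < key v) :
    (Finset.univ.filter (fun x => key x ≤ key u)).card <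
    (Finset.univ.filter (fun x => key x ≤ key v)).card := by
  apply Finset.card_lt_card
  rw [Finset.ssubset_def]
  constructor
  · intro x hx
    simp only [Finset.mem_filter, Finset.mem_univ, true_and] at hx ⊢
    omega
  · intro hsub
    have hv : v ∈ Finset.univ.filter (fun x => key x ≤ key v) := by simp
    have := hsub hv
    simp only [Finset.mem_filter, Finset.mem_univ, true_and] at this
    omega

/-- Key monotonicity: if the index is bounded by `N`, the key respects strict weight order. -/
lemma POCaux.key_mono {α : Type*} (w idx : α → ℕ) (N : ℕ) (hidx : ∀ a, idx a < N + 1)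
    {a b : α} (h : w a < w b) :
    w a * (N + 1) + idx a < w b * (N + 1) + idx b := by
  have h2 : (w a + 1) * (N + 1) ≤ w b * (N + 1) := Nat.mul_le_mul_right _ h
  have h3 : (w a + 1) * (N + 1) = w a * (N + 1) + (N + 1) := by ring
  have := hidx a
  omega

lemma POCaux.adj_cases {u v : Fin m ⊕ Fin n}
    (h : (completeBipartiteGraph (Fin m) (Fin n)).Adj u v) :
    (∃ i j, u = Sum.inl i ∧ v = Sum.inr j) ∨ (∃ i j, u = Sum.inr j ∧ v = Sum.inl i) := by
  cases u with
  | inl i => cases v with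
    | inl i' => simp [completeBipartiteGraph] at h
    | inr j => exact Or.inl ⟨i, j, rfl, rfl⟩
  | inr j => cases v with
    | inl i' => exact Or.inr ⟨i', j, rfl, rfl⟩
    | inr j' => simp [completeBipartiteGraph] at h

lemma POCaux.adj_of_sides (i : Fin m) (j : Fin n) :
    (completeBipartiteGraph (Fin m) (Fin n)).Adj (Sum.inl i) (Sum.inr j) := by
  simp [completeBipartiteGraph]

/-- Upper bound construction 1: a POC with colors in `{1,…,m+n}`, for any weight. -/
lemma POCaux.exists_poc_card (w : Fin m ⊕ Fin n → ℕ) :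
    ∃ c : Fin m ⊕ Fin n → ℕ, (∀ v, 1 ≤ c v ∧ c v ≤ m + n) ∧
      IsPOC (completeBipartiteGraph (Fin m) (Fin n)) w c := by
  classical
  set idx : Fin m ⊕ Fin n → ℕ := Sum.elim (fun i => (i : ℕ)) (fun j => m + (j : ℕ)) with hidxdef
  have hidx : ∀ a, idx a < m + n + 1 := by
    rintro (i | j) <;> simp [hidxdef] <;> omega
  have hidxinj : ∀ a b : Fin m ⊕ Fin n, idx a = idx b → a = b := by
    rintro (i | j) (i' | j') h <;> simp [hidxdef] at h ⊢
    · exact Fin.ext h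
    · have := i.isLt; omega
    · have := i'.isLt; omega
    · exact Fin.ext (by omega)
  set key : Fin m ⊕ Fin n → ℕ := fun v => w v * (m + n + 1) + idx v with hkeydef
  have hkeymono : ∀ {a b : Fin m ⊕ Fin n}, w a < w b → key a < key b := fun h =>
    POCaux.key_mono w idx (m + n) hidx h
  have hkeyinj : ∀ a b : Fin m ⊕ Fin n, key a = key b → a = b := by
    intro a b h
    rcases lt_trichotomy (w a) (w b) with hw | hw | hw
    · exact absurd h (Nat.ne_of_lt (hkeymono hw))
    · refine hidxinj a b ?_
      simp only [hkeydef] at h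
      rw [hw] at h
      omega
    · exact absurd h.symm (Nat.ne_of_lt (hkeymono hw))
  refine ⟨fun v => (Finset.univ.filter (fun u => key u ≤ key v)).card, ?_, ?_⟩
  · intro v
    constructor
    · have : v ∈ Finset.univ.filter (fun u => key u ≤ key v) := by simp
      exact Finset.card_pos.mpr ⟨v, this⟩
    · calc (Finset.univ.filter (fun u => key u ≤ key v)).card
          ≤ (Finset.univ : Finset (Fin m ⊕ Fin n)).card := Finset.card_filter_le _ _
        _ = m + n := by simp
  · intro u v _
    constructor
    · intro hw
      exact POCaux.count_lt key (hkeymono hw)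
    · intro hw hc
      rcases lt_trichotomy (key u) (key v) with hk | hk | hk
      · exact absurd hc (Nat.ne_of_lt (POCaux.count_lt key hk))
      · have huv : u = v := hkeyinj u v hk
        subst huv
        simp only [hkeydef] at hk
        exact absurd ‹(completeBipartiteGraph (Fin m) (Fin n)).Adj _ _› (fun h => h.ne rfl)
      · exact absurd hc.symm (Nat.ne_of_lt (POCaux.count_lt key hk))

/-- Upper bound construction 2: a POC with colors in `{1,…,2m+1}`, for any weight. -/
lemma POCaux.exists_poc_2m1 (w : Fin m ⊕ Fin n → ℕ) :
    ∃ c : Fin m ⊕ Fin n → ℕ, (∀ v, 1 ≤ c v ∧ c v ≤ 2 * m + 1) ∧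
      IsPOC (completeBipartiteGraph (Fin m) (Fin n)) w c := by
  classical
  set wA : Fin m → ℕ := fun i => w (Sum.inl i) with hwA
  set keyA : Fin m → ℕ := fun i => wA i * (m + 1) + (i : ℕ) with hkeyA
  have hkmono : ∀ {a b : Fin m}, wA a < wA b → keyA a < keyA b := by
    intro a b h
    exact POCaux.key_mono wA (fun i => (i : ℕ)) m (fun a => a.isLt.trans (Nat.lt_succ_self m)) h
  set rank : Fin m → ℕ := fun i => (Finset.univ.filter (fun i' => keyA i' ≤ keyA i)).card
    with hrank
  set kB : Fin n → ℕ := fun j => (Finset.univ.filter (fun i => wA i < w (Sum.inr j))).card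
    with hkB
  have hrank1 : ∀ i, 1 ≤ rank i := by
    intro i
    have : i ∈ Finset.univ.filter (fun i' => keyA i' ≤ keyA i) := by simp
    exact Finset.card_pos.mpr ⟨i, this⟩
  have hrankm : ∀ i, rank i ≤ m := by
    intro i
    calc rank i ≤ (Finset.univ : Finset (Fin m)).card := Finset.card_filter_le _ _
      _ = m := by simp
  have hkBm : ∀ j, kB j ≤ m := by
    intro j
    calc kB j ≤ (Finset.univ : Finset (Fin m)).card := Finset.card_filter_le _ _
      _ = m := by simp
  -- key inequality 1 : if w (inl i) < w (inr j) then rank i ≤ kB j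
  have hle : ∀ (i : Fin m) (j : Fin n), wA i < w (Sum.inr j) → rank i ≤ kB j := by
    intro i j h
    apply Finset.card_le_card
    intro i' hi'
    simp only [Finset.mem_filter, Finset.mem_univ, true_and] at hi' ⊢
    have hwle : wA i' ≤ wA i := by
      by_contra hlt
      push_neg at hlt
      exact absurd hi' (not_le.mpr (hkmono hlt))
    omega
  -- key inequality 2 : if w (inr j) < w (inl i) then kB j < rank i
  have hlt2 : ∀ (i : Fin m) (j : Fin n), w (Sum.inr j) < wA i → kB j < rank i := by
    intro i j h
    apply Finset.card_lt_card
    rw [Finset.ssubset_def]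
    constructor
    · intro i' hi'
      simp only [Finset.mem_filter, Finset.mem_univ, true_and] at hi' ⊢
      exact le_of_lt (hkmono (hi'.trans h))
    · intro hsub
      have : i ∈ Finset.univ.filter (fun i' => keyA i' ≤ keyA i) := by simp
      have := hsub this
      simp only [Finset.mem_filter, Finset.mem_univ, true_and] at this
      omega
  refine ⟨Sum.elim (fun i => 2 * rank i) (fun j => 2 * kB j + 1), ?_, ?_⟩
  · rintro (i | j)
    · have h1 := hrank1 i; have h2 := hrankm i
      constructor <;> simp <;> omega
    · have h2 := hkBm j
      constructor <;> simp <;> omega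
  · intro u v hadj
    rcases POCaux.adj_cases hadj with ⟨i, j, hu, hv⟩ | ⟨i, j, hu, hv⟩ <;> subst hu <;> subst hv
    · constructor
      · intro hw
        have := hlt2 i j hw
        simp only [Sum.elim_inl, Sum.elim_inr]
        omega
      · intro _ hc
        simp only [Sum.elim_inl, Sum.elim_inr] at hc
        omega
    · constructor
      · intro hw
        have := hle i j hw
        simp only [Sum.elim_inl, Sum.elim_inr]
        omega
      · intro _ hc
        simp only [Sum.elim_inl, Sum.elim_inr] at hc
        omega

/-- For any weight, `pocNumber` of the complete bipartite graph is at most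
`min (m+n) (2m+1)`. -/
lemma POCaux.pocNumber_le (w : Fin m ⊕ Fin n → ℕ) :
    pocNumber (completeBipartiteGraph (Fin m) (Fin n)) w ≤ min (m + n) (2 * m + 1) := by
  rcases le_total (m + n) (2 * m + 1) with h | h
  · rw [min_eq_left h]
    obtain ⟨c, hc, hpoc⟩ := POCaux.exists_poc_card w
    exact Nat.sInf_le ⟨c, hc, hpoc⟩
  · rw [min_eq_right h]
    obtain ⟨c, hc, hpoc⟩ := POCaux.exists_poc_2m1 w
    exact Nat.sInf_le ⟨c, hc, hpoc⟩

/-- The hard weight function. -/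
noncomputable def POCaux.w0 (m n : ℕ) : Fin m ⊕ Fin n → ℕ :=
  Sum.elim (fun i => 2 * (i : ℕ) + 2)
    (fun j => if 2 * (j : ℕ) + 1 ≤ min (m + n) (2 * m + 1) then 2 * (j : ℕ) + 1 else 1)

/-- Chain lemma: any POC of `(G, w0)` with positive colors has a color `≥ s` at a vertex
of weight `s`, for each `1 ≤ s ≤ L`. -/
lemma POCaux.chain (hm : 1 ≤ m) (hmn : m ≤ n) (c : Fin m ⊕ Fin n → ℕ)
    (hc1 : ∀ v, 1 ≤ c v)
    (hpoc : IsPOC (completeBipartiteGraph (Fin m) (Fin n)) (POCaux.w0 m n) c) :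
    ∀ s, 1 ≤ s → s ≤ min (m + n) (2 * m + 1) → ∃ v, POCaux.w0 m n v = s ∧ s ≤ c v := by
  set L := min (m + n) (2 * m + 1) with hL
  intro s hs1
  induction s, hs1 using Nat.le_induction with
  | base =>
    intro hsL
    refine ⟨Sum.inr ⟨0, by omega⟩, ?_, hc1 _⟩
    simp only [POCaux.w0, Sum.elim_inr]
    rw [if_pos (by omega)]
  | succ s hs ih =>
    intro hsL
    obtain ⟨v', hv'w, hv'c⟩ := ih (by omega)
    -- parity of w0 determines the side
    rcases Nat.even_or_odd (s + 1) with hpar | hpar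
    · -- s + 1 even: next vertex is inl ((s-1)/2)
      obtain ⟨k, hk⟩ := hpar
      have hkm : k - 1 < m := by omega
      have hwv : POCaux.w0 m n (Sum.inl ⟨k - 1, hkm⟩) = s + 1 := by
        simp only [POCaux.w0, Sum.elim_inl]
        omega
      -- v' must be an inr vertex since its weight s is odd
      obtain ⟨j', hj'⟩ : ∃ j', v' = Sum.inr j' := by
        rcases v' with i' | j'
        · exfalso
          simp only [POCaux.w0, Sum.elim_inl] at hv'w
          omega
        · exact ⟨j', rfl⟩
      subst hj'
      have hadj := POCaux.adj_of_sides (⟨k - 1, hkm⟩ : Fin m) j'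
      have := (hpoc hadj).1 (by rw [hv'w, hwv]; omega)
      exact ⟨Sum.inl ⟨k - 1, hkm⟩, hwv, by omega⟩
    · -- s + 1 odd: next vertex is inr (s/2)
      obtain ⟨k, hk⟩ := hpar
      have hkn : k < n := by omega
      have hwv : POCaux.w0 m n (Sum.inr ⟨k, hkn⟩) = s + 1 := by
        simp only [POCaux.w0, Sum.elim_inr]
        rw [if_pos (by omega)]
        omega
      obtain ⟨i', hi'⟩ : ∃ i', v' = Sum.inl i' := by
        rcases v' with i' | j'
        · exact ⟨i', rfl⟩
        · exfalso
          simp only [POCaux.w0, Sum.elim_inr] at hv'w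
          by_cases hcase : 2 * (j' : ℕ) + 1 ≤ L
          · rw [if_pos hcase] at hv'w; omega
          · rw [if_neg hcase] at hv'w; omega
      subst hi'
      have hadj := (POCaux.adj_of_sides i' (⟨k, hkn⟩ : Fin n)).symm
      have := (hpoc hadj).1 (by rw [hv'w, hwv]; omega)
      exact ⟨Sum.inr ⟨k, hkn⟩, hwv, by omega⟩

/-- The hard weight achieves the bound. -/
lemma POCaux.pocNumber_w0 (hm : 1 ≤ m) (hmn : m ≤ n) :
    pocNumber (completeBipartiteGraph (Fin m) (Fin n)) (POCaux.w0 m n)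
      = min (m + n) (2 * m + 1) := by
  set L := min (m + n) (2 * m + 1) with hL
  apply le_antisymm (POCaux.pocNumber_le _)
  apply le_csInf
  · rcases le_total (m + n) (2 * m + 1) with h | h
    · obtain ⟨c, hc, hpoc⟩ := POCaux.exists_poc_card (POCaux.w0 m n)
      exact ⟨m + n, c, hc, hpoc⟩
    · obtain ⟨c, hc, hpoc⟩ := POCaux.exists_poc_2m1 (POCaux.w0 m n)
      exact ⟨2 * m + 1, c, hc, hpoc⟩
  · rintro θ ⟨c, hc, hpoc⟩
    have hLpos : 1 ≤ L := by
      simp only [hL]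
      omega
    obtain ⟨v, _, hcv⟩ := POCaux.chain hm hmn c (fun v => (hc v).1) hpoc L hLpos le_rfl
    exact hcv.trans (hc v).2

end Aux

/-- for `1 ≤ m ≤ n` and `t ≥ 2m+1`,
`χ_POC(K_{m,n}; t) = min (m+n) (2m+1)`. -/
theorem pocNumberT_completeBipartite (m n t : ℕ) (hm : 1 ≤ m) (hmn : m ≤ n)
    (ht : 2 * m + 1 ≤ t) :
    pocNumberT (completeBipartiteGraph (Fin m) (Fin n)) t = min (m + n) (2 * m + 1) := by
  set L := min (m + n) (2 * m + 1) with hL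
  have hw0bound : ∀ v, 1 ≤ POCaux.w0 m n v ∧ POCaux.w0 m n v ≤ t := by
    rintro (i | j)
    · simp only [POCaux.w0, Sum.elim_inl]
      have := i.isLt
      omega
    · simp only [POCaux.w0, Sum.elim_inr]
      by_cases hcase : 2 * (j : ℕ) + 1 ≤ min (m + n) (2 * m + 1)
      · rw [if_pos hcase]
        omega
      · rw [if_neg hcase]
        omega
  have hmem : L ∈ {k | ∃ w : Fin m ⊕ Fin n → ℕ, (∀ v, 1 ≤ w v ∧ w v ≤ t) ∧
      k = pocNumber (completeBipartiteGraph (Fin m) (Fin n)) w} :=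
    ⟨POCaux.w0 m n, hw0bound, (POCaux.pocNumber_w0 hm hmn).symm⟩
  have hub : ∀ k ∈ {k | ∃ w : Fin m ⊕ Fin n → ℕ, (∀ v, 1 ≤ w v ∧ w v ≤ t) ∧
      k = pocNumber (completeBipartiteGraph (Fin m) (Fin n)) w}, k ≤ L := by
    rintro k ⟨w, _, rfl⟩
    exact POCaux.pocNumber_le w
  exact le_antisymm (csSup_le ⟨L, hmem⟩ hub) (le_csSup ⟨L, hub⟩ hmem)
end

section
/- For any graph G with at least one edge and any positive integer t, (χ_POC(G;t) − 1)/(χ(G) − 1) ≤ t; equivalently, χ_POC(G;t) ≤ (χ(G) − 1)·t + 1. -/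
open SimpleGraph

/-- for any graph with an edge, `χ_POC(G;t) ≤ (χ(G) − 1)·t + 1`. -/
theorem pocNumberT_le {V : Type*} [Fintype V] (G : SimpleGraph V)
    (h : ∃ u v : V, G.Adj u v) (t : ℕ) (ht : 1 ≤ t) :
    (pocNumberT G t : ℕ∞) ≤ (G.chromaticNumber - 1) * t + 1 := by
  classical
  obtain ⟨u₀, v₀, huv₀⟩ := h
  set n : ℕ := ENat.toNat G.chromaticNumber with hn
  have hcol : G.Colorable n := G.colorable_chromaticNumber_of_fintype
  have hne : G.chromaticNumber ≠ ⊤ := by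
    rw [chromaticNumber_ne_top_iff_exists]
    exact ⟨Fintype.card V, G.colorable_of_fintype⟩
  have hχ : G.chromaticNumber = (n : ℕ∞) := (ENat.coe_toNat hne).symm
  obtain ⟨C⟩ := hcol
  have hn2 : 2 ≤ n := by
    by_contra hlt
    push_neg at hlt
    interval_cases n
    · exact (C u₀).elim0
    · have : C u₀ = C v₀ := Subsingleton.elim _ _
      exact C.valid huv₀ this
  have hn0 : 0 < n := by omega
  -- key bound on pocNumber for admissible weights
  have key : ∀ w : V → ℕ, (∀ v, 1 ≤ w v ∧ w v ≤ t) → pocNumber G w ≤ (n - 1) * t + 1 := by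
    intro w hw
    apply Nat.sInf_le
    refine ⟨fun v => (w v - 1) * (n - 1) + ((C v).val + w v) % n + 1, ?_, ?_⟩
    · intro v
      dsimp only
      constructor
      · omega
      · obtain ⟨t', rfl⟩ : ∃ t', t = t' + 1 := ⟨t - 1, by omega⟩
        obtain ⟨m, hm⟩ : ∃ m, n = m + 2 := ⟨n - 2, by omega⟩
        have h1 : w v - 1 ≤ t' := by have := (hw v).2; omega
        have h2 : (w v - 1) * (n - 1) ≤ t' * (n - 1) :=
          Nat.mul_le_mul_right _ h1
        have h3 : ((C v).val + w v) % n < n := Nat.mod_lt _ hn0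
        have h4 : (n - 1) * (t' + 1) = t' * (n - 1) + (n - 1) := by
          rw [hm]; ring_nf
        omega
    · intro u v hadj
      have hCC : (C u).val ≠ (C v).val := fun hh => C.valid hadj (Fin.ext hh)
      have hCu : (C u).val < n := (C u).isLt
      have hCv : (C v).val < n := (C v).isLt
      dsimp only
      constructor
      · intro hlt
        set a : ℕ := ((C u).val + w u) % n with ha
        set b : ℕ := ((C v).val + w v) % n with hb
        have hbn : b < n := Nat.mod_lt _ hn0
        have han : a < n := Nat.mod_lt _ hn0
        rcases Nat.lt_or_ge (w v + 1) (w u) with hcase | hcase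
        · -- w u ≥ w v + 2
          have h1 : (w v + 1) * (n - 1) ≤ (w u - 1) * (n - 1) :=
            Nat.mul_le_mul_right _ (by omega)
          have h2 : (w v + 1) * (n - 1) = (w v - 1) * (n - 1) + 2 * (n - 1) := by
            rw [show w v + 1 = (w v - 1) + 2 by have := (hw v).1; omega, Nat.add_mul]
          omega
        · -- w u = w v + 1
          have heq : w u = w v + 1 := by omega
          have h1 : (w u - 1) * (n - 1) = (w v - 1) * (n - 1) + (n - 1) := by
            rw [show w u - 1 = (w v - 1) + 1 by have := (hw v).1; omega, Nat.add_mul, Nat.one_mul]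
          -- need: ¬ (a = 0 ∧ b = n - 1)
          have hnot : ¬ (a = 0 ∧ b = n - 1) := by
            rintro ⟨ha0, hb0⟩
            have m1 : (C u).val + (w v + 1) ≡ 0 [MOD n] := by
              show ((C u).val + (w v + 1)) % n = 0 % n
              rw [Nat.zero_mod, ← heq]
              exact ha0
            have m2 : (C v).val + w v ≡ n - 1 [MOD n] := by
              show ((C v).val + w v) % n = (n - 1) % n
              rw [Nat.mod_eq_of_lt (by omega : n - 1 < n)]
              exact hb0
            have m3 : (C v).val + w v + 1 ≡ n [MOD n] := by
              have := m2.add_right 1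
              rwa [show n - 1 + 1 = n by omega] at this
            have mn : n ≡ 0 [MOD n] := by
              show n % n = 0 % n
              simp
            have m4 : (C v).val + (w v + 1) ≡ 0 [MOD n] := by
              rw [← add_assoc]
              exact m3.trans mn
            have h5 : (C u).val + (w v + 1) ≡ (C v).val + (w v + 1) [MOD n] :=
              m1.trans m4.symm
            have h6 : (C u).val ≡ (C v).val [MOD n] :=
              Nat.ModEq.add_right_cancel' _ h5
            exact hCC (by
              have := h6
              rwa [Nat.ModEq, Nat.mod_eq_of_lt hCu, Nat.mod_eq_of_lt hCv] at this)
          omega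
      · intro hweq hceq
        rw [hweq] at hceq
        have h5 : ((C u).val + w v) ≡ ((C v).val + w v) [MOD n] := by
          show ((C u).val + w v) % n = ((C v).val + w v) % n
          omega
        have h6 : (C u).val ≡ (C v).val [MOD n] := Nat.ModEq.add_right_cancel' _ h5
        exact hCC (by rwa [Nat.ModEq, Nat.mod_eq_of_lt hCu, Nat.mod_eq_of_lt hCv] at h6)
  have hmain : pocNumberT G t ≤ (n - 1) * t + 1 := by
    apply csSup_le'
    rintro m ⟨w, hw, rfl⟩
    exact key w hw
  rw [hχ]
  have h2 : (pocNumberT G t : ℕ∞) ≤ (((n - 1) * t + 1 : ℕ) : ℕ∞) := by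
    exact_mod_cast hmain
  refine h2.trans ?_
  rw [Nat.cast_add, Nat.cast_mul, Nat.cast_one, ENat.coe_sub, Nat.cast_one]
end

section
/- For any complete multipartite graph K_{n_1,...,n_k} with k ≥ 2 parts and any positive integer t, χ_POC(K_{n_1,...,n_k}; t) ≤ (k−1)·t + 1. -/
open SimpleGraph

private lemma mod_cancel {k pu pv x : ℕ} (hpu : pu < k) (hpv : pv < k)
    (h : (pu + x) % k = (pv + x) % k) : pu = pv := by
  have h1 : pu % k = pv % k :=
    Nat.ModEq.add_right_cancel' x (h : Nat.ModEq k (pu + x) (pv + x))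
  rwa [Nat.mod_eq_of_lt hpu, Nat.mod_eq_of_lt hpv] at h1

private lemma color_lt {k a b pu pv : ℕ} (hk : 2 ≤ k) (hpu : pu < k) (hpv : pv < k)
    (hne : pu ≠ pv) (hb : 1 ≤ b) (hba : b < a) :
    (b - 1) * (k - 1) + (pv + b) % k + 1 < (a - 1) * (k - 1) + (pu + a) % k + 1 := by
  obtain ⟨K, rfl⟩ : ∃ K, k = K + 2 := ⟨k - 2, by omega⟩
  obtain ⟨c, rfl⟩ : ∃ c, b = c + 1 := ⟨b - 1, by omega⟩
  have hmv : (pv + (c + 1)) % (K + 2) < K + 2 := Nat.mod_lt _ (by omega)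
  rcases eq_or_lt_of_le (Nat.succ_le_of_lt hba) with h1 | h2
  · -- a = b + 1
    obtain rfl : a = c + 2 := h1.symm
    show c * (K + 1) + (pv + (c + 1)) % (K + 2) + 1 <
      (c + 1) * (K + 1) + (pu + (c + 2)) % (K + 2) + 1
    have hmul : (c + 1) * (K + 1) = c * (K + 1) + (K + 1) := by ring
    rcases Nat.eq_zero_or_pos ((pu + (c + 2)) % (K + 2)) with hmu | hmu
    · -- mu = 0; show mv ≠ K + 1
      have hne' : (pv + (c + 1)) % (K + 2) ≠ K + 1 := by
        intro hmv'
        apply hne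
        apply mod_cancel (x := c + 2) hpu hpv
        have hstep : (pv + (c + 2)) % (K + 2) = 0 := by
          rw [show pv + (c + 2) = pv + (c + 1) + 1 by ring, Nat.add_mod, hmv',
            Nat.one_mod, show K + 1 + 1 = K + 2 from rfl, Nat.mod_self]
        rw [hmu, hstep]
      omega
    · omega
  · -- a ≥ b + 2
    obtain ⟨d, rfl⟩ : ∃ d, a = c + 3 + d := ⟨a - (c + 3), by omega⟩
    rw [show c + 3 + d - 1 = c + 2 + d by omega]
    show c * (K + 1) + (pv + (c + 1)) % (K + 2) + 1 <
      (c + 2 + d) * (K + 1) + (pu + (c + 3 + d)) % (K + 2) + 1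
    have hmul : (c + 2 + d) * (K + 1) = c * (K + 1) + (K + 1) + (K + 1) + d * (K + 1) := by
      ring
    omega


/-- for a complete multipartite graph with `k ≥ 2` parts,
`χ_POC(K_{n_1,…,n_k}; t) ≤ (k−1)·t + 1`. -/
theorem pocNumberT_completeMultipartite_le (k t : ℕ) (hk : 2 ≤ k) (ht : 1 ≤ t)
    (n : Fin k → ℕ) (hn : ∀ i, 1 ≤ n i) :
    pocNumberT (completeMultipartiteGraph fun i : Fin k => Fin (n i)) t ≤
      (k - 1) * t + 1 := by
  unfold pocNumberT pocNumber IsPOC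

  apply csSup_le'
  rintro x ⟨w, hw, rfl⟩
  apply Nat.sInf_le
  refine ⟨fun v => (w v - 1) * (k - 1) + ((v.1.val + w v) % k) + 1, fun v => ?_, fun u v hadj => ?_⟩
  · refine ⟨Nat.le_add_left 1 _, ?_⟩
    show (w v - 1) * (k - 1) + ((v.1.val + w v) % k) + 1 ≤ (k - 1) * t + 1
    have h1 := (hw v).1; have h2 := (hw v).2
    have hm : (v.1.val + w v) % k < k := Nat.mod_lt _ (by omega)
    have hle : (w v - 1) * (k - 1) ≤ (t - 1) * (k - 1) :=
      Nat.mul_le_mul_right _ (by omega)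
    have hq : (t - 1) * (k - 1) + (k - 1) + 1 = (k - 1) * t + 1 := by
      obtain ⟨s, rfl⟩ : ∃ s, t = s + 1 := ⟨t - 1, by omega⟩
      simp only [Nat.add_sub_cancel]
      ring
    omega
  · have hne : u.1 ≠ v.1 := hadj
    have hpu : u.1.val < k := u.1.isLt
    have hpv : v.1.val < k := v.1.isLt
    constructor
    · intro hlt
      exact color_lt (by omega) hpu hpv (fun h => hne (Fin.ext h)) (hw v).1 hlt
    · intro hww heq
      have heq2 : (w u - 1) * (k - 1) + ((u.1.val + w u) % k) + 1 =
          (w v - 1) * (k - 1) + ((v.1.val + w v) % k) + 1 := heq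
      rw [hww] at heq2
      have : u.1.val = v.1.val := by
        apply mod_cancel (x := w v) hpu hpv
        omega
      exact hne (Fin.ext this)
end

section
/- If D is a good acyclic orientation of a vertex-weighted graph (G,w), then χ_POC(G,w) ≤ ℓ′(D), where ℓ′(D) is the number of vertices of a longest directed path in D. -/
open SimpleGraph

/-- A good acyclic orientation of the vertex-weighted graph `(G,w)`: each edge gets
exactly one direction, there is no directed cycle, and each arc goes from the
larger weight to the smaller weight. -/
structure GoodAcyclicOrientation {V : Type*} (G : SimpleGraph V) (w : V → ℕ) where
  arc : V → V → Prop
  arc_adj : ∀ x y, arc x y → G.Adj x y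
  orient : ∀ x y, G.Adj x y → (arc x y ↔ ¬ arc y x)
  acyclic : ∀ v, ¬ Relation.TransGen arc v v
  good : ∀ x y, arc x y → w y ≤ w x

/-- `ℓ'` of a digraph given by arc relation `r`: the number of vertices of a longest
directed path. -/
noncomputable def dirLongest {V : Type*} (r : V → V → Prop) : ℕ :=
  sSup {n | ∃ l : List V, l.Chain' r ∧ l.Nodup ∧ n = l.length}

/-- `ℓ'(G,w)`: the minimum of `ℓ'(D)` over all good acyclic orientations `D` of `(G,w)`. -/
noncomputable def ellPrime {V : Type*} (G : SimpleGraph V) (w : V → ℕ) : ℕ :=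
  sInf {n | ∃ D : GoodAcyclicOrientation G w, n = dirLongest D.arc}

private lemma transGen_of_chain_mem {V : Type*} {r : V → V → Prop} {y x : V} :
    ∀ t : List V, List.Chain r y t → x ∈ t → Relation.TransGen r y x := by
  intro t
  induction t generalizing y with
  | nil => intro _ h; simp at h
  | cons b t' ih =>
    intro hc hm
    rw [List.Chain, List.isChain_cons_cons] at hc
    rcases List.mem_cons.mp hm with rfl | hm'
    · exact Relation.TransGen.single hc.1
    · exact Relation.TransGen.head hc.1 (ih hc.2 hm')

/-- for every good acyclic orientation `D` of `(G,w)`,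
`χ_POC(G,w) ≤ ℓ'(D)`. -/
theorem pocNumber_le_dirLongest {V : Type*} [Fintype V] (G : SimpleGraph V)
    (w : V → ℕ) (D : GoodAcyclicOrientation G w) :
    pocNumber G w ≤ dirLongest D.arc := by
  classical
  set r := D.arc with hr
  set S : V → Set ℕ := fun v =>
    {n | ∃ l : List V, l.Chain' r ∧ l.Nodup ∧ l.head? = some v ∧ n = l.length} with hS
  set c : V → ℕ := fun v => sSup (S v) with hc
  have hbddS : ∀ v, BddAbove (S v) := by
    intro v
    refine ⟨Fintype.card V, fun n hn => ?_⟩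
    obtain ⟨l, _, hnd, _, rfl⟩ := hn
    exact hnd.length_le_card
  have hbddD : BddAbove {n | ∃ l : List V, l.Chain' r ∧ l.Nodup ∧ n = l.length} := by
    refine ⟨Fintype.card V, fun n hn => ?_⟩
    obtain ⟨l, _, hnd, rfl⟩ := hn
    exact hnd.length_le_card
  have hmem1 : ∀ v, 1 ∈ S v := by
    intro v
    exact ⟨[v], List.isChain_singleton v, by simp, by simp, by simp⟩
  have hc1 : ∀ v, 1 ≤ c v := fun v => le_csSup (hbddS v) (hmem1 v)
  have hcle : ∀ v, c v ≤ dirLongest r := by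
    intro v
    refine csSup_le_csSup hbddD ⟨1, hmem1 v⟩ ?_
    rintro n ⟨l, h1, h2, _, h4⟩
    exact ⟨l, h1, h2, h4⟩
  -- arc x y implies c y < c x
  have hstep : ∀ x y, r x y → c y < c x := by
    intro x y hxy
    have hne : (S y).Nonempty := ⟨1, hmem1 y⟩
    obtain ⟨l, hch, hnd, hhd, hlen⟩ := Nat.sSup_mem hne (hbddS y)
    obtain ⟨t, rfl⟩ : ∃ t, l = y :: t := by
      cases l with
      | nil => simp at hhd
      | cons a t =>
        have : a = y := by simpa using hhd
        exact ⟨t, by rw [this]⟩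
    have hchain : List.Chain r y t := hch
    have hxnot : x ∉ y :: t := by
      intro hx
      rcases List.mem_cons.mp hx with rfl | hx'
      · exact D.acyclic x (Relation.TransGen.single hxy)
      · exact D.acyclic x
          (Relation.TransGen.head hxy (transGen_of_chain_mem t hchain hx'))
    have hmem : (y :: t).length + 1 ∈ S x := by
      refine ⟨x :: y :: t, ?_, ?_, rfl, by simp⟩
      · exact List.isChain_cons_cons.mpr ⟨hxy, hch⟩
      · exact List.nodup_cons.mpr ⟨hxnot, hnd⟩
    have h2 := le_csSup (hbddS x) hmem
    simp only [hc]
    omega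
  -- c is a POC
  have hpoc : IsPOC G w c := by
    intro u v hadj
    have horient := D.orient u v hadj
    constructor
    · intro hw
      have hnvu : ¬ r v u := fun h => absurd (D.good v u h) (by omega)
      have : r u v := horient.mpr (fun h => hnvu h)
      · exact hstep u v this
    · intro _ heq
      by_cases h : r u v
      · exact absurd heq (Nat.ne_of_gt (hstep u v h))
      · have : r v u := by
          by_contra h2
          exact h (horient.mpr h2)
        exact absurd heq (Nat.ne_of_gt (hstep v u this)).symm
  exact Nat.sInf_le ⟨c, fun v => ⟨hc1 v, hcle v⟩, hpoc⟩
end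

section
/- If c : V(G) → {1,...,θ} is a properly ordered coloring of (G,w), then orienting each edge xy with c(x) > c(y) from x to y yields a good acyclic orientation D of (G,w) with ℓ′(D) ≤ θ. In particular, ℓ′(G,w) ≤ χ_POC(G,w). -/
open SimpleGraph

lemma poc_key {V : Type*} (G : SimpleGraph V)
    (w : V → ℕ) (c : V → ℕ) (θ : ℕ) (hcθ : ∀ v, 1 ≤ c v ∧ c v ≤ θ)
    (hc : IsPOC G w c) :
    ∃ D : GoodAcyclicOrientation G w,
      (∀ x y : V, D.arc x y ↔ G.Adj x y ∧ c y < c x) ∧ dirLongest D.arc ≤ θ := by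
  have hne : ∀ ⦃x y : V⦄, G.Adj x y → c x ≠ c y := by
    intro x y h
    rcases lt_trichotomy (w x) (w y) with hw | hw | hw
    · exact ((hc h.symm).1 hw).ne
    · exact (hc h).2 hw
    · exact ((hc h).1 hw).ne'
  refine ⟨⟨fun x y => G.Adj x y ∧ c y < c x, fun x y h => h.1, ?_, ?_, ?_⟩, fun _ _ => Iff.rfl, ?_⟩
  · intro x y h
    have := hne h
    constructor
    · rintro ⟨_, h1⟩ ⟨_, h2⟩; omega
    · intro h2
      refine ⟨h, ?_⟩
      by_contra h3
      exact h2 ⟨h.symm, by omega⟩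
  · intro v hv
    have htr : Transitive (fun x y : V => c y < c x) := fun a b d h1 h2 => lt_trans h2 h1
    have h2 : Relation.TransGen (fun x y : V => c y < c x) v v :=
      Relation.TransGen.mono (fun a b (hab : G.Adj a b ∧ c b < c a) => hab.2) v v hv
    rw [@Relation.transGen_eq_self _ (fun x y : V => c y < c x) ⟨fun _ _ _ h1 h2 => htr h1 h2⟩] at h2
    exact lt_irrefl _ h2
  · rintro x y ⟨h, hlt⟩
    by_contra h2
    exact absurd ((hc h.symm).1 (by omega)) (by omega)
  · refine csSup_le ⟨0, ?_⟩ ?_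
    · exact ⟨[], List.isChain_nil, List.nodup_nil, rfl⟩
    rintro n ⟨l, hch, hnd, rfl⟩
    have hm : (l.map c).Chain' (· > ·) :=
      List.isChain_map_of_isChain c (fun a b hab => hab.2) hch
    have hp : (l.map c).Pairwise (· > ·) := List.isChain_iff_pairwise.1 hm
    have hnd' : (l.map c).Nodup := hp.imp (fun h => by omega)
    have hsub : (l.map c).toFinset ⊆ Finset.Icc 1 θ := by
      intro a ha
      rw [List.mem_toFinset, List.mem_map] at ha
      obtain ⟨v, _, rfl⟩ := ha
      simpa using hcθ v
    calc l.length = (l.map c).toFinset.card := by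
          rw [List.toFinset_card_of_nodup hnd', List.length_map]
      _ ≤ (Finset.Icc 1 θ).card := Finset.card_le_card hsub
      _ = θ := by simp

/-- orienting each edge from the larger color to the smaller color of
a POC gives a good acyclic orientation `D` with `ℓ'(D) ≤ θ`; hence
`ℓ'(G,w) ≤ χ_POC(G,w)`. -/
theorem goodOrientation_of_POC {V : Type*} [Fintype V] (G : SimpleGraph V)
    (w : V → ℕ) (c : V → ℕ) (θ : ℕ) (hcθ : ∀ v, 1 ≤ c v ∧ c v ≤ θ)
    (hc : IsPOC G w c) :
    (∃ D : GoodAcyclicOrientation G w,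
      (∀ x y : V, D.arc x y ↔ G.Adj x y ∧ c y < c x) ∧ dirLongest D.arc ≤ θ) ∧
      ellPrime G w ≤ pocNumber G w := by
  obtain ⟨D, hD, hθ⟩ := poc_key G w c θ hcθ hc
  refine ⟨⟨D, hD, hθ⟩, ?_⟩
  have hmem : pocNumber G w ∈ {θ | ∃ c : V → ℕ, (∀ v, 1 ≤ c v ∧ c v ≤ θ) ∧ IsPOC G w c} :=
    Nat.sInf_mem ⟨θ, c, hcθ, hc⟩
  obtain ⟨c', hc'θ, hc'⟩ := hmem
  obtain ⟨D', _, hD'θ⟩ := poc_key G w c' (pocNumber G w) hc'θ hc'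
  exact le_trans (Nat.sInf_le ⟨D', rfl⟩) hD'θ
end

section
/- Weighted Gallai–Hasse–Roy–Vitaver theorem: for any vertex-weighted graph (G,w), χ_POC(G,w) = ℓ′(G,w), the minimum over all good acyclic orientations D of (G,w) of the number of vertices of a longest directed path in D. -/
open SimpleGraph

set_option linter.unusedSectionVars false
section GHRVAux

variable {V : Type*} [Fintype V] {r : V → V → Prop}

lemma ghrv_chain_transGen {u : V} : ∀ {l : List V} {v : V}, List.Chain r v l → u ∈ l →
    Relation.TransGen r v u := by
  intro l
  induction l with
  | nil => simp
  | cons b t ih =>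
    intro v hc hm
    replace hc : r v b ∧ List.Chain r b t := List.isChain_cons_cons.1 hc
    rcases List.mem_cons.1 hm with rfl | hm
    · exact Relation.TransGen.single hc.1
    · exact Relation.TransGen.head hc.1 (ih hc.2 hm)

/-- set of lengths of directed paths starting at `v`. -/
def ghrvS (r : V → V → Prop) (v : V) : Set ℕ :=
  {n | ∃ l : List V, (v :: l).Chain' r ∧ (v :: l).Nodup ∧ n = (v :: l).length}

noncomputable def ghrvC (r : V → V → Prop) (v : V) : ℕ := sSup (ghrvS r v)

lemma ghrv_one_mem (v : V) : (1 : ℕ) ∈ ghrvS r v := ⟨[], by simp [List.Chain', List.isChain_singleton]⟩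

lemma ghrv_bdd (v : V) : BddAbove (ghrvS r v) :=
  ⟨Fintype.card V, by rintro n ⟨l, _, hn, rfl⟩; exact hn.length_le_card⟩

lemma ghrv_dir_bdd : BddAbove {n | ∃ l : List V, l.Chain' r ∧ l.Nodup ∧ n = l.length} :=
  ⟨Fintype.card V, by rintro n ⟨l, _, hn, rfl⟩; exact hn.length_le_card⟩

lemma ghrvC_pos (v : V) : 1 ≤ ghrvC r v := le_csSup (ghrv_bdd v) (ghrv_one_mem v)

lemma ghrvC_le_dirLongest (v : V) : ghrvC r v ≤ dirLongest r := by
  apply csSup_le ⟨1, ghrv_one_mem v⟩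
  rintro n ⟨l, hc, hn, rfl⟩
  exact le_csSup ghrv_dir_bdd ⟨v :: l, hc, hn, rfl⟩

lemma ghrvC_lt (acyc : ∀ x, ¬ Relation.TransGen r x x) {u v : V} (h : r u v) :
    ghrvC r v < ghrvC r u := by
  obtain ⟨l, hc, hn, he⟩ := Nat.sSup_mem ⟨1, ghrv_one_mem v⟩ (ghrv_bdd v)
  have hc' : List.Chain r v l := hc
  have hmem : u ∉ v :: l := by
    intro hm
    rcases List.mem_cons.1 hm with rfl | hm
    · exact acyc u (Relation.TransGen.single h)
    · exact acyc u (Relation.TransGen.head h (ghrv_chain_transGen hc' hm))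
  have hlong : (u :: v :: l).length ≤ ghrvC r u :=
    le_csSup (ghrv_bdd u) ⟨v :: l, List.isChain_cons_cons.2 ⟨h, hc⟩, List.nodup_cons.2 ⟨hmem, hn⟩, rfl⟩
  have he2 : ghrvC r v = (v :: l).length := he
  simp only [List.length_cons] at hlong he2
  omega

end GHRVAux
section GHRVAux2

variable {V : Type*} [Fintype V]

lemma ghrv_poc_exists (G : SimpleGraph V) (w : V → ℕ) :
    ∃ θ, ∃ c : V → ℕ, (∀ v, 1 ≤ c v ∧ c v ≤ θ) ∧ IsPOC G w c := by
  classical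
  set N := Fintype.card V with hN
  let e := Fintype.equivFin V
  set key : V → ℕ := fun v => w v * N + (e v : ℕ) with hkeydef
  have hkey_lt : ∀ {u v : V}, w u < w v → key u < key v := by
    intro u v h
    have h1 : ((e u : ℕ)) < N := (e u).isLt
    have h2 : (w u + 1) * N ≤ w v * N := Nat.mul_le_mul_right N h
    have h3 : (0:ℕ) ≤ (e v : ℕ) := Nat.zero_le _
    simp only [hkeydef]
    nlinarith
  have hkey_inj : Function.Injective key := by
    intro u v h
    have hw : w u = w v := by
      rcases lt_trichotomy (w u) (w v) with h' | h' | h'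
      · exact absurd h (hkey_lt h').ne
      · exact h'
      · exact absurd h (hkey_lt h').ne'
    have he : (e u : ℕ) = (e v : ℕ) := by
      simp only [hkeydef, hw] at h; omega
    exact e.injective (Fin.ext he)
  set c : V → ℕ := fun v => (Finset.univ.filter (fun u => key u < key v)).card + 1 with hcdef
  have hc_mono : ∀ {u v : V}, key u < key v → c u < c v := by
    intro u v h
    have hsub : Finset.univ.filter (fun a => key a < key u) ⊆
        Finset.univ.filter (fun a => key a < key v) := by
      intro a ha
      simp only [Finset.mem_filter] at ha ⊢
      exact ⟨ha.1, ha.2.trans h⟩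
    have hss : Finset.univ.filter (fun a => key a < key u) ⊂
        Finset.univ.filter (fun a => key a < key v) := by
      refine (Finset.ssubset_iff_of_subset hsub).2 ⟨u, ?_, ?_⟩
      · simp [h]
      · simp
    simpa only [hcdef] using Nat.add_lt_add_right (Finset.card_lt_card hss) 1
  refine ⟨N, c, fun v => ⟨Nat.le_add_left 1 _, ?_⟩, ?_⟩
  · have hsub : Finset.univ.filter (fun a => key a < key v) ⊆ Finset.univ.erase v := by
      intro a ha
      simp only [Finset.mem_filter] at ha
      refine Finset.mem_erase.2 ⟨?_, Finset.mem_univ a⟩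
      intro h; exact absurd ha.2 (by simp [h])
    have h1 : (Finset.univ.filter (fun a => key a < key v)).card ≤ N - 1 := by
      have := Finset.card_le_card hsub
      simpa [Finset.card_erase_of_mem, hN] using this
    have hpos : 1 ≤ N := by
      rw [hN]; exact Fintype.card_pos_iff.2 ⟨v⟩
    simp only [hcdef]
    omega
  · intro u v hadj
    constructor
    · intro h; exact hc_mono (hkey_lt h)
    · intro hw heq
      have hk : key u = key v := by
        rcases lt_trichotomy (key u) (key v) with h' | h' | h'
        · exact absurd heq (hc_mono h').ne
        · exact h'
        · exact absurd heq (hc_mono h').ne'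
      exact hadj.ne (hkey_inj hk)

lemma ghrv_orient (G : SimpleGraph V) (w : V → ℕ) {c : V → ℕ} {θ : ℕ}
    (hb : ∀ v, 1 ≤ c v ∧ c v ≤ θ) (hpoc : IsPOC G w c) :
    ∃ D : GoodAcyclicOrientation G w, dirLongest D.arc ≤ θ := by
  classical
  set arc : V → V → Prop :=
    fun x y => G.Adj x y ∧ (w y < w x ∨ (w x = w y ∧ c y < c x)) with harcdef
  have harc_c : ∀ {x y : V}, arc x y → c y < c x := by
    rintro x y ⟨hadj, h | ⟨hw, hcc⟩⟩
    · exact (hpoc hadj).1 h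
    · exact hcc
  refine ⟨⟨arc, fun x y h => h.1, ?_, ?_, fun x y h => ?_⟩, ?_⟩
  · intro x y hadj
    constructor
    · intro hxy hyx
      exact absurd (harc_c hyx) (Nat.lt_asymm (harc_c hxy))
    · intro hn
      rcases lt_trichotomy (w x) (w y) with h | h | h
      · exact absurd ⟨hadj.symm, Or.inl h⟩ hn
      · rcases Ne.lt_or_gt ((hpoc hadj).2 h) with h' | h'
        · exact absurd ⟨hadj.symm, Or.inr ⟨h.symm, h'⟩⟩ hn
        · exact ⟨hadj, Or.inr ⟨h, h'⟩⟩
      · exact ⟨hadj, Or.inl h⟩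
  · intro v hv
    have key : ∀ {a b : V}, Relation.TransGen arc a b → c b < c a := by
      intro a b h
      induction h with
      | single h => exact harc_c h
      | tail _ h ih => exact (harc_c h).trans ih
    exact absurd (key hv) (lt_irrefl _)
  · rcases h.2 with h | ⟨h, _⟩
    · exact h.le
    · exact h.ge
  · show dirLongest arc ≤ θ
    have h0 : (0:ℕ) ∈ {n | ∃ l : List V, l.Chain' arc ∧ l.Nodup ∧ n = l.length} :=
      ⟨[], by simp [List.Chain', List.isChain_nil]⟩
    apply csSup_le ⟨0, h0⟩
    rintro n ⟨l, hc', hn, rfl⟩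
    haveI : IsTrans V (fun a b => c b < c a) := ⟨fun a b d hab hbd => hbd.trans hab⟩
    have hp : l.Pairwise (fun a b => c b < c a) :=
      List.isChain_iff_pairwise.1 (List.IsChain.imp (fun a b h => harc_c h) hc')
    have hpm : (l.map c).Pairwise (fun a b : ℕ => b < a) := List.pairwise_map.2 hp
    have hnd : (l.map c).Nodup := hpm.imp fun h => h.ne'
    have hsub : (l.map c).toFinset ⊆ Finset.Icc 1 θ := by
      intro x hx
      rcases List.mem_map.1 (List.mem_toFinset.1 hx) with ⟨v, _, rfl⟩
      exact Finset.mem_Icc.2 (hb v)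
    have := Finset.card_le_card hsub
    rw [List.toFinset_card_of_nodup hnd, List.length_map, Nat.card_Icc] at this
    omega

end GHRVAux2
/-- weighted Gallai–Hasse–Roy–Vitaver:
`χ_POC(G,w) = ℓ'(G,w)`. -/
theorem pocNumber_eq_ellPrime {V : Type*} [Fintype V] (G : SimpleGraph V)
    (w : V → ℕ) : pocNumber G w = ellPrime G w := by
  classical
  obtain ⟨θ₀, c₀, hb₀, hpoc₀⟩ := ghrv_poc_exists G w
  obtain ⟨D₀, -⟩ := ghrv_orient G w hb₀ hpoc₀
  apply le_antisymm
  · -- pocNumber ≤ ellPrime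
    have hm : dirLongest D₀.arc ∈ {n | ∃ D : GoodAcyclicOrientation G w, n = dirLongest D.arc} :=
      ⟨D₀, rfl⟩
    apply le_csInf ⟨_, hm⟩
    rintro n ⟨D, rfl⟩
    apply Nat.sInf_le
    refine ⟨ghrvC D.arc, fun v => ⟨ghrvC_pos v, ghrvC_le_dirLongest v⟩, ?_⟩
    intro u v hadj
    have hor := D.orient u v hadj
    constructor
    · intro hw
      have harc : D.arc u v := by
        by_contra h
        have h' : D.arc v u := by
          by_contra h2
          exact h (hor.2 h2)
        exact absurd (D.good v u h') (Nat.not_le.2 hw)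
      exact ghrvC_lt D.acyclic harc
    · intro hw heq
      rcases em (D.arc u v) with h | h
      · exact absurd heq (ghrvC_lt D.acyclic h).ne'
      · have h' : D.arc v u := by
          by_contra h2
          exact h (hor.2 h2)
        exact absurd heq (ghrvC_lt D.acyclic h').ne
  · -- ellPrime ≤ pocNumber
    have hne : {θ | ∃ c : V → ℕ, (∀ v, 1 ≤ c v ∧ c v ≤ θ) ∧ IsPOC G w c}.Nonempty :=
      ⟨θ₀, c₀, hb₀, hpoc₀⟩
    obtain ⟨c, hb, hpoc⟩ := Nat.sInf_mem hne
    obtain ⟨D, hD⟩ := ghrv_orient G w hb hpoc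
    exact le_trans (Nat.sInf_le ⟨D, rfl⟩) hD
end
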